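/- Defective concavity: let Φ ∈ C¹([0,∞)) satisfy Φ(0)=0 and a ≤ Φ'(ξ) ≤ A for all ξ > 0 with 0 < a ≤ A. Let κ : ℝ^d → [0,∞) be a probability density (∫κ = 1) and let u : ℝ^d → [0,∞) be locally integrable such that the convolutions below are defined at x. Then (Φ^{1/2}(u) * κ)(x) ≤ √(A/a) · Φ^{1/2}((u * κ)(x)). -/

import Mathlib

/-!
By the mean value theorem the derivative bounds give `a ξ ≤ Φ ξ ≤ A ξ` for `ξ ≥ 0`. Hence
`√(Φ (u y)) ≤ √A √(u y)` pointwise, Jensen's inequality for the concave square root against the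
probability weight `κ (x - ·)` (here in its Cauchy–Schwarz form) bounds `∫ √u κ(x - ·)` by
`√((u * κ) x)`, and finally `(u * κ) x ≤ Φ ((u * κ) x) / a`.
-/

open MeasureTheory Set Real

lemma mul_le_of_le_deriv {f f' : ℝ → ℝ} {c : ℝ} (hf : ContinuousOn f (Ici 0)) (hf0 : f 0 = 0)
    (hderiv : ∀ ξ, 0 < ξ → HasDerivAt f (f' ξ) ξ) (hc : ∀ ξ, 0 < ξ → c ≤ f' ξ) {ξ : ℝ}
    (hξ : 0 ≤ ξ) : c * ξ ≤ f ξ := by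
  have h := (convex_Ici 0).mul_sub_le_image_sub_of_le_deriv (C := c) hf ?_ ?_ 0 self_mem_Ici
    ξ hξ hξ
  · simpa [hf0] using h
  · rw [interior_Ici]
    exact fun ξ hξ => (hderiv ξ hξ).differentiableAt.differentiableWithinAt
  · rw [interior_Ici]
    exact fun ξ hξ => (hderiv ξ hξ).deriv ▸ hc ξ hξ

lemma le_mul_of_deriv_le {f f' : ℝ → ℝ} {C : ℝ} (hf : ContinuousOn f (Ici 0)) (hf0 : f 0 = 0)
    (hderiv : ∀ ξ, 0 < ξ → HasDerivAt f (f' ξ) ξ) (hC : ∀ ξ, 0 < ξ → f' ξ ≤ C) {ξ : ℝ}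
    (hξ : 0 ≤ ξ) : f ξ ≤ C * ξ := by
  have h := mul_le_of_le_deriv (f := -f) (f' := -f') (c := -C) hf.neg (by simp [hf0])
    (fun ξ hξ => (hderiv ξ hξ).neg) (fun ξ hξ => neg_le_neg (hC ξ hξ)) hξ
  simp only [Pi.neg_apply, neg_mul, neg_le_neg_iff] at h
  exact h

lemma sqrt_mul_eq_sqrt_mul_mul_sqrt {s t : ℝ} (hs : 0 ≤ s) (ht : 0 ≤ t) :
    √s * t = √(s * t) * √t := by
  rw [sqrt_mul hs, mul_assoc, mul_self_sqrt ht]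

section SqrtIntegral

variable {α : Type*} [MeasurableSpace α] {μ : Measure α}

lemma memLp_two_sqrt {f : α → ℝ} (hf0 : 0 ≤ f) (hf : Integrable f μ) :
    MemLp (fun x => √(f x)) 2 μ :=
  (memLp_two_iff_integrable_sq (continuous_sqrt.comp_aestronglyMeasurable
    hf.aestronglyMeasurable)).2 (hf.congr (.of_forall fun x => (sq_sqrt (hf0 x)).symm))

variable {g w : α → ℝ}

lemma integrable_sqrt_mul (hg : 0 ≤ g) (hw : 0 ≤ w) (hwi : Integrable w μ)
    (hgw : Integrable (fun x => g x * w x) μ) : Integrable (fun x => √(g x) * w x) μ :=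
  ((memLp_two_sqrt (fun x => mul_nonneg (hg x) (hw x)) hgw).integrable_mul
    (memLp_two_sqrt hw hwi)).congr
    (.of_forall fun x => (sqrt_mul_eq_sqrt_mul_mul_sqrt (hg x) (hw x)).symm)

lemma integral_sqrt_mul_le_sqrt_integral_mul (hg : 0 ≤ g) (hw : 0 ≤ w) (hw1 : ∫ x, w x ∂μ = 1)
    (hgw : Integrable (fun x => g x * w x) μ) :
    ∫ x, √(g x) * w x ∂μ ≤ √(∫ x, g x * w x ∂μ) := by
  have hwi : Integrable w μ := .of_integral_ne_zero (by rw [hw1]; exact one_ne_zero)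
  have hgw0 : 0 ≤ fun x => g x * w x := fun x => mul_nonneg (hg x) (hw x)
  have holder := integral_mul_le_Lp_mul_Lq_of_nonneg Real.HolderConjugate.two_two
    (.of_forall fun x => sqrt_nonneg (g x * w x)) (.of_forall fun x => sqrt_nonneg (w x))
    (by simpa using memLp_two_sqrt hgw0 hgw) (by simpa using memLp_two_sqrt hw hwi)
  simp_rw [rpow_two, sq_sqrt (hgw0 _), sq_sqrt (hw _), hw1, one_rpow, mul_one,
    ← sqrt_eq_rpow] at holder
  calc ∫ x, √(g x) * w x ∂μ = ∫ x, √(g x * w x) * √(w x) ∂μ :=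
        integral_congr_ae (.of_forall fun x => sqrt_mul_eq_sqrt_mul_mul_sqrt (hg x) (hw x))
    _ ≤ √(∫ x, g x * w x ∂μ) := holder

end SqrtIntegral

lemma sqrt_mul_sqrt_le_sqrt_div_mul_sqrt {a A t s : ℝ} (ha : 0 < a) (hA : 0 ≤ A)
    (hts : a * t ≤ s) : √A * √t ≤ √(A / a) * √s := by
  rw [← sqrt_mul hA, ← sqrt_mul (div_nonneg hA ha.le)]
  refine sqrt_le_sqrt ?_
  calc A * t = A / a * (a * t) := by field_simp
    _ ≤ A / a * s := by gcongr

theorem defective_concavity_general (d : ℕ) (Φ Φ' : ℝ → ℝ)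
    (hcont : ContinuousOn Φ (Set.Ici 0)) (hΦ0 : Φ 0 = 0)
    (hderiv : ∀ ξ : ℝ, 0 < ξ → HasDerivAt Φ (Φ' ξ) ξ)
    (a A : ℝ) (ha : 0 < a) (haA : a ≤ A)
    (hbd : ∀ ξ : ℝ, 0 < ξ → a ≤ Φ' ξ ∧ Φ' ξ ≤ A)
    (κ : (Fin d → ℝ) → ℝ) (hκ0 : ∀ x, 0 ≤ κ x) (hκ1 : ∫ x, κ x = 1)
    (u : (Fin d → ℝ) → ℝ) (hu0 : ∀ x, 0 ≤ u x)
    (x : Fin d → ℝ)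
    (hint1 : Integrable (fun y => u y * κ (x - y)) volume) :
    ∫ y, Real.sqrt (Φ (u y)) * κ (x - y) ≤
      Real.sqrt (A / a) * Real.sqrt (Φ (∫ y, u y * κ (x - y))) := by
  have hκx0 : 0 ≤ fun y => κ (x - y) := fun y => hκ0 (x - y)
  have hκx1 : ∫ y, κ (x - y) = 1 := by rw [integral_sub_left_eq_self, hκ1]
  have hκxi : Integrable (fun y => κ (x - y)) := .of_integral_ne_zero (hκx1 ▸ one_ne_zero)
  have hΦ_sqrt_le : ∀ ξ, 0 ≤ ξ → √(Φ ξ) ≤ √A * √ξ := fun ξ hξ => by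
    rw [← sqrt_mul' A hξ]
    exact sqrt_le_sqrt (le_mul_of_deriv_le hcont hΦ0 hderiv (fun ξ hξ => (hbd ξ hξ).2) hξ)
  calc ∫ y, √(Φ (u y)) * κ (x - y) ≤ ∫ y, √A * (√(u y) * κ (x - y)) := by
        refine integral_mono_of_nonneg (.of_forall fun y => mul_nonneg (sqrt_nonneg _) (hκ0 _))
          ((integrable_sqrt_mul hu0 hκx0 hκxi hint1).const_mul _) (.of_forall fun y => ?_)
        dsimp only
        rw [← mul_assoc]
        exact mul_le_mul_of_nonneg_right (hΦ_sqrt_le _ (hu0 y)) (hκ0 _)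
    _ = √A * ∫ y, √(u y) * κ (x - y) := integral_const_mul _ _
    _ ≤ √A * √(∫ y, u y * κ (x - y)) := by
        gcongr
        exact integral_sqrt_mul_le_sqrt_integral_mul hu0 hκx0 hκx1 hint1
    _ ≤ √(A / a) * √(Φ (∫ y, u y * κ (x - y))) :=
        sqrt_mul_sqrt_le_sqrt_div_mul_sqrt ha (ha.le.trans haA)
          (mul_le_of_le_deriv hcont hΦ0 hderiv (fun ξ hξ => (hbd ξ hξ).1)
            (integral_nonneg fun y => mul_nonneg (hu0 y) (hκ0 _)))

/-- Defective concavity: under the uniform ellipticity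
a ≤ Φ' ≤ A, for any probability density κ and nonnegative u,
(Φ^{1/2}(u) * κ)(x) ≤ √(A/a) · Φ^{1/2}((u * κ)(x)). -/
theorem defective_concavity (d : ℕ) (Φ Φ' : ℝ → ℝ)
    (hcont : ContinuousOn Φ (Set.Ici 0)) (hΦ0 : Φ 0 = 0)
    (hderiv : ∀ ξ : ℝ, 0 < ξ → HasDerivAt Φ (Φ' ξ) ξ)
    (a A : ℝ) (ha : 0 < a) (haA : a ≤ A)
    (hbd : ∀ ξ : ℝ, 0 < ξ → a ≤ Φ' ξ ∧ Φ' ξ ≤ A)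
    (κ : (Fin d → ℝ) → ℝ) (hκ0 : ∀ x, 0 ≤ κ x) (hκ1 : ∫ x, κ x = 1)
    (u : (Fin d → ℝ) → ℝ) (hu0 : ∀ x, 0 ≤ u x)
    (huloc : MeasureTheory.LocallyIntegrable u volume)
    (x : Fin d → ℝ)
    (hint1 : Integrable (fun y => u y * κ (x - y)) volume)
    (hint2 : Integrable (fun y => Real.sqrt (Φ (u y)) * κ (x - y)) volume) :
    ∫ y, Real.sqrt (Φ (u y)) * κ (x - y) ≤
      Real.sqrt (A / a) * Real.sqrt (Φ (∫ y, u y * κ (x - y))) :=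
  defective_concavity_general d Φ Φ' hcont hΦ0 hderiv a A ha haA hbd κ hκ0 hκ1 u hu0 x hint1
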